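/- arXiv:2206.10047 — 3 statements merged into one kernel-verified Lean document; each statement's English description precedes it below -/
import Mathlib

section
/- In the quasi-staircase subshift: suppose z ≥ 1 and the word 0 1^z 0 belongs to L. Then there exist unique n ≥ 1 and 0 ≤ i < b_n with z = c_n + i. Moreover, 0 1^{c_n+i} 0 is not a subword of B_m for any m ≤ n, and for every x ∈ X and t ∈ ℤ with x_{[t, t+c_n+i+2)} = 0 1^{c_n+i} 0, there exists 1 ≤ q ≤ a_n such that x restricted to the interval of the appropriate length ending at position t+c_n+i+2 equals the word 1^{c_{n+1}} (∏_{j=0}^{i-1} (B_n 1^{c_n+j})^{a_n}) (B_n 1^{c_n+i})^q 0, where the product over an empty range is the empty word. -/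
open Filter MeasureTheory
open scoped ENNReal

/-- `n`-fold concatenation (power) of a word. -/
def wpow {α : Type*} (v : List α) (n : ℕ) : List α := (List.replicate n v).flatten

/-- The word `1^k` over the alphabet `{0,1}` (with `0 = false`, `1 = true`). -/
def ones (k : ℕ) : List Bool := List.replicate k true

/-- The left shift on biinfinite sequences. -/
def shift {A : Type*} (x : ℤ → A) : ℤ → A := fun n => x (n + 1)

/-- The word `x_{[s, s+len)}` read off a biinfinite sequence. -/
def readWord {A : Type*} (x : ℤ → A) (s : ℤ) (len : ℕ) : List A :=
  (List.range len).map (fun i => x (s + (i : ℤ)))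

/-- A finite word occurs (as a consecutive subword) in a biinfinite sequence. -/
def occursIn {A : Type*} (w : List A) (x : ℤ → A) : Prop :=
  ∃ k : ℤ, readWord x k w.length = w

/-- The quasi-staircase words: `B 1 = 0` and
`B (n+1) = (∏_{i=0}^{b n - 1} (B n · 1^{c n + i})^{a n}) · B n`. -/
def qsB (a b c : ℕ → ℕ) : ℕ → List Bool
  | 0 => []
  | 1 => [false]
  | (n+2) =>
      ((List.range (b (n+1))).map
        (fun i => wpow (qsB a b c (n+1) ++ ones (c (n+1) + i)) (a (n+1)))).flatten
        ++ qsB a b c (n+1)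

/-- The language of the quasi-staircase subshift: all subwords of some `B n`, `n ≥ 1`. -/
def qsL (a b c : ℕ → ℕ) : Set (List Bool) :=
  {w | ∃ n, 1 ≤ n ∧ w <:+: qsB a b c n}

/-- The quasi-staircase subshift: biinfinite sequences all of whose finite subwords
lie in the language. -/
def qsX (a b c : ℕ → ℕ) : Set (ℤ → Bool) :=
  {x | ∀ w : List Bool, occursIn w x → w ∈ qsL a b c}

/-- Right-special words of the quasi-staircase subshift: `w`, `w0` and `w1` all lie
in the language. -/
def RS (a b c : ℕ → ℕ) (w : List Bool) : Prop :=
  w ∈ qsL a b c ∧ (w ++ [false]) ∈ qsL a b c ∧ (w ++ [true]) ∈ qsL a b c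

/-- The tail length `z(w)`: the number of `1`s at the end of `w`. -/
def ztail (w : List Bool) : ℕ := (w.reverse.takeWhile id).length

/-- The level-`n` generating words: right-special words containing a `0` whose tail
length lies in `[c n, c (n+1))`. -/
def Wn (a b c : ℕ → ℕ) (n : ℕ) : Set (List Bool) :=
  {w | RS a b c w ∧ false ∈ w ∧ c n ≤ ztail w ∧ ztail w < c (n+1)}

/-- The word complexity of the quasi-staircase subshift. -/
noncomputable def cplx (a b c : ℕ → ℕ) (q : ℕ) : ℕ :=
  Set.ncard {w | w ∈ qsL a b c ∧ w.length = q}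

/-- The level-`n` complexity functions. -/
noncomputable def cplxn (a b c : ℕ → ℕ) (n q : ℕ) : ℕ :=
  Set.ncard {w | w ∈ Wn a b c n ∧ w.length < q}

/-- The height sequence of the quasi-staircase: `h n = |B n|`. -/
def qsh (a b c : ℕ → ℕ) : ℕ → ℕ
  | 0 => 0
  | 1 => 1
  | (n+2) => (a (n+1) * b (n+1) + 1) * qsh a b c (n+1)
      + a (n+1) * b (n+1) * c (n+1) + a (n+1) * b (n+1) * (b (n+1) - 1) / 2

/-- The post-productive sequence `m n = a n * h n + (a n + 1) * (c n + b n - 1)`. -/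
def qsm (a b c : ℕ → ℕ) (n : ℕ) : ℕ :=
  a n * qsh a b c n + (a n + 1) * (c n + b n - 1)

/-- The standing quasi-staircase hypotheses: `a`, `b`, `c` are nondecreasing sequences
of positive integers (for `n ≥ 1`) tending to infinity, with `c 1 ≥ 1` and
`c (n+1) ≥ c n + b n` for all `n ≥ 1`. -/
def QShyp (a b c : ℕ → ℕ) : Prop :=
  (∀ n, 1 ≤ n → 1 ≤ a n ∧ a n ≤ a (n+1)) ∧ Tendsto a atTop atTop ∧
  (∀ n, 1 ≤ n → 1 ≤ b n ∧ b n ≤ b (n+1)) ∧ Tendsto b atTop atTop ∧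
  (∀ n, 1 ≤ n → 1 ≤ c n ∧ c n ≤ c (n+1)) ∧ Tendsto c atTop atTop ∧
  (∀ n, 1 ≤ n → c n + b n ≤ c (n+1))

/-- The word `1^{c (n+1)} (∏_{j=0}^{i-1} (B n 1^{c n + j})^{a n}) (B n 1^{c n + i})^q 0`
of which every occurrence of `0 1^{c n + i} 0` is a suffix. -/
def qsOccWord (a b c : ℕ → ℕ) (n i q : ℕ) : List Bool :=
  ones (c (n+1)) ++
    ((List.range i).map (fun j => wpow (qsB a b c n ++ ones (c n + j)) (a n))).flatten ++
    wpow (qsB a b c n ++ ones (c n + i)) q ++ [false]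

/-!
`B (n+1)` is `B n` interleaved with runs of ones of lengths `c n + j` (`j < b n`, each used
`a n` times), and `B n` begins and ends with `0`. So an occurrence of `0 1^z 0` in such a word
either lies inside one copy of `B n`, or consists of the last `0` of a copy, a whole run and the
first `0` of the next copy, and then `z` is a run length. By induction every `0 1^z 0` in `B N`
has `z = c m + i` with `m < N` and `i < b m`, and `(m, i)` is unique because
`c (m+1) ≥ c m + b m` makes the intervals `[c m, c m + b m)` disjoint. For `N > n`, `B N` is
made of copies of `B (n+1)` separated by runs of at least `c (n+1) > c n + i` ones, so
`0 1^{c n + i} 0` lies in a copy of `B (n+1)`: it closes the `q`-th `B n 1^{c n + i}` of the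
`i`-th group, and the copy is preceded by at least `c (n+1)` ones. In a point of the subshift,
a long enough window ending at the occurrence lies in the language, which gives the last claim.
-/

section Words

variable {α : Type*}

@[simp] lemma ones_length (k : ℕ) : (ones k).length = k := List.length_replicate

lemma wpow_succ (v : List α) (q : ℕ) : wpow v (q + 1) = wpow v q ++ v := by
  simp [wpow, List.replicate_succ']

@[simp] lemma wpow_length (v : List α) (q : ℕ) : (wpow v q).length = q * v.length := by
  simp [wpow]

lemma exists_eq_append_of_append_eq_append {u w x y : List α} (h : u ++ w = x ++ y)
    (hle : u.length ≤ x.length) : ∃ e, x = u ++ e ∧ w = e ++ y := by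
  rcases List.append_eq_append_iff.1 h with h | ⟨e, rfl, rfl⟩
  · exact h
  · obtain rfl : e = [] := List.length_eq_zero_iff.1 (by simpa using hle)
    exact ⟨[], by simp, by simp⟩

end Words

section ReadWord

variable {α : Type*} (x : ℤ → α)

-- The frozen `readWord` elaborates by coercing `List.range L` to `List ℤ` in the list monad.
lemma readWord_eq_map (s : ℤ) (L : ℕ) :
    readWord x s L = (List.range L).map fun i : ℕ => x (s + i) := by
  simp only [readWord, List.pure_def, List.bind_eq_flatMap, ← List.map_eq_flatMap, List.map_map]
  rfl

@[simp] lemma readWord_length (s : ℤ) (L : ℕ) : (readWord x s L).length = L := by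
  simp [readWord_eq_map]

lemma readWord_add (s : ℤ) (m l : ℕ) :
    readWord x s (m + l) = readWord x s m ++ readWord x (s + m) l := by
  simp only [readWord_eq_map, List.range_add, List.map_append, List.map_map]
  congr 1
  exact List.map_congr_left fun j _ => by simp [add_assoc]

lemma readWord_eq_of_isSuffix {s : ℤ} {L : ℕ} {w : List α} (h : w <:+ readWord x s L) :
    readWord x (s + L - w.length) w.length = w := by
  obtain ⟨p, hp⟩ := h
  obtain rfl : L = p.length + w.length := by simpa using (congrArg List.length hp).symm
  rw [readWord_add] at hp
  rw [Nat.cast_add, ← add_assoc, add_sub_cancel_right]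
  exact (List.append_inj_right' hp (by simp)).symm

end ReadWord

def zeroOnesZero (z : ℕ) : List Bool := [false] ++ ones z ++ [false]

@[simp] lemma zeroOnesZero_length (z : ℕ) : (zeroOnesZero z).length = z + 2 := by
  simp [zeroOnesZero]

lemma ones_append_false_cons_inj {z k : ℕ} {v s : List Bool}
    (h : ones z ++ false :: v = ones k ++ false :: s) : z = k ∧ v = s := by
  induction z generalizing k with
  | zero => cases k <;> simp_all [ones, List.replicate_succ]
  | succ z ih =>
    cases k with
    | zero => simp [ones, List.replicate_succ] at h
    | succ k =>
      simp only [ones, List.replicate_succ, List.cons_append, List.cons.injEq, true_and] at h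
      simpa using ih h

-- The bounds put the first `0` of the left occurrence inside the `0 1^k` of the right one.
lemma zeroOnesZero_inj_of_overlap {u v p s : List Bool} {z k : ℕ}
    (h : u ++ zeroOnesZero z ++ v = p ++ zeroOnesZero k ++ s)
    (hpu : p.length ≤ u.length) (hup : u.length ≤ p.length + k) :
    u = p ∧ z = k ∧ v = s := by
  have hlen : u.length = p.length := by
    by_contra hne
    have hu : (u ++ zeroOnesZero z ++ v)[u.length]? = some false := by
      simp [zeroOnesZero]
    have hp : (p ++ zeroOnesZero k ++ s)[u.length]? = some true := by
      rw [List.append_assoc, List.getElem?_append_right hpu,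
        show u.length - p.length = (u.length - p.length - 1) + 1 by omega]
      have hlt : u.length - p.length - 1 < k := by omega
      simp [zeroOnesZero, ones, List.getElem?_append, hlt]
    rw [h, hp] at hu
    exact absurd hu (by simp)
  obtain ⟨rfl, hrest⟩ := List.append_inj (by simpa only [List.append_assoc] using h) hlen
  simpa [zeroOnesZero] using ones_append_false_cons_inj (by simpa [zeroOnesZero] using hrest)

/-- `spaced B [k₁, …, kₘ] = B 1^{k₁} B ⋯ B 1^{kₘ} B`. -/
def spaced (B : List Bool) (M : List ℕ) : List Bool :=
  (M.map fun k => B ++ ones k).flatten ++ B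

section Spaced

variable {B : List Bool}

lemma spaced_cons (k : ℕ) (M : List ℕ) : spaced B (k :: M) = B ++ ones k ++ spaced B M := by
  simp [spaced]

lemma spaced_append (M M' : List ℕ) :
    spaced B (M ++ M') = (M.map fun k => B ++ ones k).flatten ++ spaced B M' := by
  simp [spaced]

lemma spaced_spaced (L S : List ℕ) :
    spaced (spaced B L) S = spaced B ((S.map fun k => L ++ [k]).flatten ++ L) := by
  induction S with
  | nil => simp [spaced]
  | cons k S ih =>
    rw [spaced_cons, ih, List.map_cons, List.flatten_cons]
    simp only [List.append_assoc]
    rw [spaced_append L, List.singleton_append, spaced_cons]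
    simp [spaced]

lemma exists_spaced_eq_append {w : List Bool} {x : Bool} (hB : B = w ++ [x]) (M : List ℕ) :
    ∃ w', spaced B M = w' ++ [x] :=
  ⟨_, by rw [spaced, hB, ← List.append_assoc]⟩

lemma exists_spaced_eq_cons {w : List Bool} {x : Bool} (hB : B = x :: w) :
    ∀ M : List ℕ, ∃ w', spaced B M = x :: w'
  | [] => ⟨w, hB⟩
  | k :: M => ⟨_, by rw [spaced_cons, hB]; rfl⟩

lemma zeroOnesZero_infix_spaced {w w' : List Bool} (hB : B = w ++ [false])
    (hB' : B = false :: w') {z : ℕ} {M : List ℕ} {u v : List Bool}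
    (h : u ++ zeroOnesZero z ++ v = spaced B M) :
    (∃ M₁, M₁ <+: M ∧ ∃ u₀ v₀,
      u = (M₁.map fun k => B ++ ones k).flatten ++ u₀ ∧ u₀ ++ zeroOnesZero z ++ v₀ = B) ∨
    (∃ M₁, M₁ ++ [z] <+: M ∧ u ++ zeroOnesZero z = spaced B M₁ ++ ones z ++ [false]) := by
  induction M generalizing u with
  | nil => exact Or.inl ⟨[], List.nil_prefix, u, v, rfl, h⟩
  | cons k M ih =>
    rw [spaced_cons, List.append_assoc B] at h
    rcases le_or_gt (u ++ zeroOnesZero z).length B.length with hin | hout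
    · obtain ⟨v₀, rfl, -⟩ := exists_eq_append_of_append_eq_append h hin
      exact Or.inl ⟨[], List.nil_prefix, u, v₀, rfl, rfl⟩
    rcases le_or_gt (B ++ ones k).length u.length with hpast | hstraddle
    · obtain ⟨u', rfl, h'⟩ := exists_eq_append_of_append_eq_append
        (by simpa only [List.append_assoc] using h.symm) hpast
      rcases ih (by simpa only [List.append_assoc] using h'.symm) with
        ⟨M₁, hM₁, u₀, v₀, rfl, h₀⟩ | ⟨M₁, hM₁, h₁⟩
      · exact Or.inl ⟨k :: M₁, List.cons_prefix_cons.2 ⟨rfl, hM₁⟩, u₀, v₀, by simp, h₀⟩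
      · refine Or.inr ⟨k :: M₁, List.cons_prefix_cons.2 ⟨rfl, hM₁⟩, ?_⟩
        rw [List.append_assoc, h₁, spaced_cons]
        simp
    obtain ⟨r, hr⟩ := exists_spaced_eq_cons hB' M
    have h' : u ++ zeroOnesZero z ++ v = w ++ zeroOnesZero k ++ r := by
      rw [h, hr, hB]
      simp [zeroOnesZero]
    have hBw : B.length = w.length + 1 := by simp [hB]
    simp only [List.length_append, ones_length, zeroOnesZero_length] at hout hstraddle
    obtain ⟨rfl, rfl⟩ : u = w ∧ z = k := by
      rcases le_total w.length u.length with hwu | huw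
      · obtain ⟨h₁, h₂, -⟩ := zeroOnesZero_inj_of_overlap h' hwu (by omega)
        exact ⟨h₁, h₂⟩
      · obtain ⟨h₁, h₂, -⟩ := zeroOnesZero_inj_of_overlap h'.symm huw (by omega)
        exact ⟨h₁.symm, h₂.symm⟩
    refine Or.inr ⟨[], by simp, ?_⟩
    simp [hB, spaced, zeroOnesZero]

end Spaced

def stairs (A : ℕ) (v : ℕ → ℕ) (N : ℕ) : List ℕ :=
  ((List.range N).map fun j => List.replicate A (v j)).flatten

section Stairs

variable {A N : ℕ} {v : ℕ → ℕ}

lemma stairs_succ : stairs A v (N + 1) = stairs A v N ++ List.replicate A (v N) := by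
  simp [stairs, List.range_succ]

lemma mem_stairs {k : ℕ} (h : k ∈ stairs A v N) : ∃ j < N, k = v j := by
  simp only [stairs, List.mem_flatten, List.mem_map, List.mem_range] at h
  obtain ⟨_, ⟨j, hj, rfl⟩, hk⟩ := h
  exact ⟨j, hj, (List.eq_of_mem_replicate hk)⟩

lemma flatten_map_stairs {α : Type*} (f : ℕ → List α) :
    ((stairs A v N).map f).flatten = ((List.range N).map fun j => wpow (f (v j)) A).flatten := by
  simp only [stairs, List.map_flatten, List.flatten_flatten, List.map_map]
  congr 1
  exact List.map_congr_left fun j _ => by simp [wpow, List.map_replicate]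

lemma eq_of_append_singleton_prefix_stairs (hv : Function.Injective v) {M : List ℕ} {i : ℕ}
    (h : M ++ [v i] <+: stairs A v N) : ∃ q < A, M = stairs A v i ++ List.replicate q (v i) := by
  induction N with
  | zero => simp [stairs] at h
  | succ N ih =>
    rw [stairs_succ] at h
    rcases lt_or_ge M.length (stairs A v N).length with hlt | hge
    · exact ih (List.prefix_of_prefix_length_le h (List.prefix_append _ _) (by simpa))
    obtain ⟨d, rfl⟩ :=
      List.prefix_of_prefix_length_le (List.prefix_append _ _) ((List.prefix_append M _).trans h) hge
    rw [List.append_assoc, List.prefix_append_right_inj, List.prefix_replicate_iff,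
      List.append_eq_replicate_iff] at h
    obtain ⟨hlen, -, hd, hvi⟩ := h
    obtain rfl : i = N := hv (List.eq_of_mem_replicate (hvi ▸ List.mem_singleton_self _))
    exact ⟨d.length, by simpa using hlen, by rw [← hd]⟩

end Stairs

section QuasiStaircase

variable {a b c : ℕ → ℕ}

lemma qsB_succ {n : ℕ} (hn : 1 ≤ n) :
    qsB a b c (n + 1) = spaced (qsB a b c n) (stairs (a n) (c n + ·) (b n)) := by
  obtain ⟨m, rfl⟩ := Nat.exists_eq_add_of_le' hn
  rw [spaced, flatten_map_stairs, qsB]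

lemma qsB_shape (a b c : ℕ → ℕ) {n : ℕ} (hn : 1 ≤ n) :
    (∃ w, qsB a b c n = w ++ [false]) ∧ ∃ w, qsB a b c n = false :: w := by
  induction n, hn using Nat.le_induction with
  | base => exact ⟨⟨[], rfl⟩, ⟨[], rfl⟩⟩
  | succ n hn ih =>
    obtain ⟨⟨w, hw⟩, ⟨w', hw'⟩⟩ := ih
    rw [qsB_succ hn]
    exact ⟨exists_spaced_eq_append hw _, exists_spaced_eq_cons hw' _⟩

lemma qs_c_mono (hcb : ∀ n, 1 ≤ n → c n + b n ≤ c (n + 1)) {n m : ℕ} (hn : 1 ≤ n)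
    (hnm : n ≤ m) : c n ≤ c m := by
  induction m, hnm using Nat.le_induction with
  | base => rfl
  | succ m hm ih => have := hcb m (hn.trans hm); omega

lemma qs_c_add_lt (hcb : ∀ n, 1 ≤ n → c n + b n ≤ c (n + 1)) {n m i : ℕ} (hn : 1 ≤ n)
    (hnm : n < m) (hi : i < b n) : c n + i < c m := by
  have := hcb n hn
  have : c (n + 1) ≤ c m := qs_c_mono hcb (Nat.le_succ_of_le hn) hnm
  omega

lemma qs_index_unique (hcb : ∀ n, 1 ≤ n → c n + b n ≤ c (n + 1)) {n n' i i' : ℕ}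
    (hn : 1 ≤ n) (hn' : 1 ≤ n') (hi : i < b n) (hi' : i' < b n') (h : c n + i = c n' + i') :
    n = n' ∧ i = i' := by
  rcases lt_trichotomy n n' with hlt | rfl | hgt
  · have := qs_c_add_lt hcb hn hlt hi; omega
  · omega
  · have := qs_c_add_lt hcb hn' hgt hi'; omega

lemma zeroOnesZero_infix_qsB {z N : ℕ} (h : zeroOnesZero z <:+: qsB a b c N) :
    ∃ m i, 1 ≤ m ∧ m < N ∧ i < b m ∧ z = c m + i := by
  induction N with
  | zero => simpa [qsB] using h.length_le
  | succ N ih =>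
    rcases Nat.eq_zero_or_pos N with rfl | hN
    · have := h.length_le
      simp [qsB] at this
    obtain ⟨u, v, h⟩ := h
    obtain ⟨⟨w, hw⟩, ⟨w', hw'⟩⟩ := qsB_shape a b c hN
    rw [qsB_succ hN] at h
    rcases zeroOnesZero_infix_spaced hw hw' h with ⟨-, -, u₀, v₀, -, h₀⟩ | ⟨M₁, hM₁, -⟩
    · obtain ⟨m, i, hm, hmN, hi, rfl⟩ := ih ⟨u₀, v₀, h₀⟩
      exact ⟨m, i, hm, by omega, hi, rfl⟩
    · obtain ⟨j, hj, rfl⟩ := mem_stairs (hM₁.mem (by simp : z ∈ M₁ ++ [z]))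
      exact ⟨N, j, hN, by omega, hj, rfl⟩

lemma qsB_eq_spaced_of_le (hcb : ∀ n, 1 ≤ n → c n + b n ≤ c (n + 1)) {m N : ℕ} (hm : 1 ≤ m)
    (hmN : m ≤ N) : ∃ L, (∀ k ∈ L, c m ≤ k) ∧ qsB a b c N = spaced (qsB a b c m) L := by
  induction N, hmN using Nat.le_induction with
  | base => exact ⟨[], by simp, rfl⟩
  | succ N hmN ih =>
    obtain ⟨L, hL, hN⟩ := ih
    refine ⟨_, ?_, by rw [qsB_succ (hm.trans hmN), hN, spaced_spaced]⟩
    intro k hk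
    simp only [List.mem_append, List.mem_flatten, List.mem_map] at hk
    rcases hk with ⟨_, ⟨k', hk', rfl⟩, hk⟩ | hk
    rw [List.mem_append, List.mem_singleton] at hk
    rcases hk with hk | rfl
    · exact hL k hk
    · obtain ⟨j, -, rfl⟩ := mem_stairs hk'
      have := qs_c_mono hcb hm hmN
      omega
    · exact hL k hk

lemma qsOccWord_length_le {n i q q' : ℕ} (hq : q ≤ q') :
    (qsOccWord a b c n i q).length ≤ (qsOccWord a b c n i q').length := by
  simp only [qsOccWord, List.length_append, wpow_length]
  gcongr

lemma exists_qsOccWord_of_zeroOnesZero_qsB_succ (hcb : ∀ n, 1 ≤ n → c n + b n ≤ c (n + 1))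
    {n i : ℕ} (hn : 1 ≤ n) (hi : i < b n) {u v : List Bool}
    (h : u ++ zeroOnesZero (c n + i) ++ v = qsB a b c (n + 1)) :
    ∃ q, 1 ≤ q ∧ q ≤ a n ∧
      ones (c (n + 1)) ++ u ++ zeroOnesZero (c n + i) = qsOccWord a b c n i q := by
  obtain ⟨⟨w, hw⟩, ⟨w', hw'⟩⟩ := qsB_shape a b c hn
  rw [qsB_succ hn] at h
  rcases zeroOnesZero_infix_spaced hw hw' h with ⟨-, -, u₀, v₀, -, h₀⟩ | ⟨M, hM, hu⟩
  · obtain ⟨m, j, hm, hmn, hj, hmj⟩ := zeroOnesZero_infix_qsB ⟨u₀, v₀, h₀⟩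
    have := (qs_index_unique hcb hn hm hi hj hmj).1
    omega
  obtain ⟨q, hq, rfl⟩ := eq_of_append_singleton_prefix_stairs (add_right_injective (c n)) hM
  refine ⟨q + 1, by omega, hq, ?_⟩
  rw [List.append_assoc, hu, spaced_append, flatten_map_stairs, qsOccWord, wpow_succ]
  simp [spaced, List.map_replicate, wpow]

lemma ones_isSuffix_flatten_map {B : List Bool} {K : List ℕ} {m : ℕ} (hK : K ≠ [])
    (hm : ∀ k ∈ K, m ≤ k) : ones m <:+ (K.map fun k => B ++ ones k).flatten := by
  obtain ⟨K, k, rfl⟩ := List.eq_nil_or_concat' K |>.resolve_left hK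
  have hk : ones k = ones (k - m) ++ ones m := by
    rw [ones, ones, ones, ← List.replicate_add, Nat.sub_add_cancel (hm k (by simp))]
  exact ⟨(K.map fun k => B ++ ones k).flatten ++ B ++ ones (k - m), by simp [hk]⟩

lemma qsOccWord_isSuffix (hcb : ∀ n, 1 ≤ n → c n + b n ≤ c (n + 1)) {n i N : ℕ} (hn : 1 ≤ n)
    (hi : i < b n) {u v : List Bool} (h : u ++ zeroOnesZero (c n + i) ++ v = qsB a b c N)
    (hlen : (qsOccWord a b c n i (a n)).length ≤ (u ++ zeroOnesZero (c n + i)).length) :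
    ∃ q, 1 ≤ q ∧ q ≤ a n ∧ qsOccWord a b c n i q <:+ u ++ zeroOnesZero (c n + i) := by
  obtain ⟨m, j, hm, hmN, hj, hmj⟩ := zeroOnesZero_infix_qsB ⟨u, v, h⟩
  obtain ⟨rfl, -⟩ := qs_index_unique hcb hm hn hj hi hmj.symm
  obtain ⟨L, hL, hN⟩ := qsB_eq_spaced_of_le hcb (by omega : 1 ≤ m + 1) hmN
  obtain ⟨⟨w, hw⟩, ⟨w', hw'⟩⟩ := qsB_shape a b c (by omega : 1 ≤ m + 1)
  have hcm := hcb m hm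
  rw [hN] at h
  rcases zeroOnesZero_infix_spaced hw hw' h with ⟨K, hK, u₀, v₀, rfl, h₀⟩ | ⟨K, hK, -⟩
  · obtain ⟨q, hq, hqa, hocc⟩ := exists_qsOccWord_of_zeroOnesZero_qsB_succ hcb hm hi h₀
    refine ⟨q, hq, hqa, ?_⟩
    have hK₀ : K ≠ [] := by
      rintro rfl
      have : (qsOccWord a b c m i q).length ≤ (qsOccWord a b c m i (a m)).length :=
        qsOccWord_length_le hqa
      simp [← hocc] at this hlen
      omega
    rw [← hocc, List.append_assoc, List.append_assoc]
    exact List.suffix_append_self_iff.2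
      (ones_isSuffix_flatten_map hK₀ fun k hk => hL k (hK.mem hk))
  · have := hL _ (hK.mem (by simp : c m + i ∈ K ++ [c m + i]))
    omega

lemma exists_qsOccWord_of_readWord (hcb : ∀ n, 1 ≤ n → c n + b n ≤ c (n + 1)) {n i : ℕ}
    (hn : 1 ≤ n) (hi : i < b n) {x : ℤ → Bool} (hx : x ∈ qsX a b c) {t : ℤ}
    (ht : readWord x t (c n + i + 2) = zeroOnesZero (c n + i)) :
    ∃ q, 1 ≤ q ∧ q ≤ a n ∧
      readWord x (t + ((c n + i + 2 : ℕ) : ℤ) - ((qsOccWord a b c n i q).length : ℤ))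
        (qsOccWord a b c n i q).length = qsOccWord a b c n i q := by
  set L := (qsOccWord a b c n i (a n)).length
  have hread : readWord x (t - L) (L + (c n + i + 2)) =
      readWord x (t - L) L ++ zeroOnesZero (c n + i) := by
    rw [readWord_add, sub_add_cancel, ht]
  obtain ⟨N, -, u, v, huv⟩ := hx (readWord x (t - L) (L + (c n + i + 2))) ⟨t - L, by simp⟩
  rw [hread, ← List.append_assoc u] at huv
  obtain ⟨q, hq, hqa, hsuf⟩ := qsOccWord_isSuffix hcb hn hi huv (by simp [L]; omega)
  refine ⟨q, hq, hqa, ?_⟩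
  have hsuf' : qsOccWord a b c n i q <:+ readWord x (t - L) (L + (c n + i + 2)) := by
    rw [hread]
    refine List.suffix_of_suffix_length_le hsuf (by simp) ?_
    have : (qsOccWord a b c n i q).length ≤ L := qsOccWord_length_le hqa
    simp only [List.length_append, readWord_length, zeroOnesZero_length]
    omega
  convert readWord_eq_of_isSuffix x hsuf' using 3
  push_cast
  ring

end QuasiStaircase

theorem qs_zero_ones_zero_general (a b c : ℕ → ℕ) (hQS : QShyp a b c)
    (z : ℕ) (hin : ([false] ++ ones z ++ [false]) ∈ qsL a b c) :
    ∃ n i : ℕ, 1 ≤ n ∧ i < b n ∧ z = c n + i ∧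
      (∀ n' i' : ℕ, 1 ≤ n' → i' < b n' → z = c n' + i' → n' = n ∧ i' = i) ∧
      (∀ m, m ≤ n → ¬ (([false] ++ ones (c n + i) ++ [false]) <:+: qsB a b c m)) ∧
      (∀ x ∈ qsX a b c, ∀ t : ℤ,
        readWord x t (c n + i + 2) = [false] ++ ones (c n + i) ++ [false] →
        ∃ q : ℕ, 1 ≤ q ∧ q ≤ a n ∧
          readWord x (t + ((c n + i + 2 : ℕ) : ℤ) - ((qsOccWord a b c n i q).length : ℤ))
            (qsOccWord a b c n i q).length = qsOccWord a b c n i q) := by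
  obtain ⟨-, -, -, -, -, -, hcb⟩ := hQS
  obtain ⟨N, -, hN⟩ := hin
  obtain ⟨n, i, hn, -, hi, rfl⟩ := zeroOnesZero_infix_qsB hN
  refine ⟨n, i, hn, hi, rfl, fun n' i' hn' hi' h => qs_index_unique hcb hn' hn hi' hi h.symm,
    fun m hm hocc => ?_, fun x hx t ht => exists_qsOccWord_of_readWord hcb hn hi hx ht⟩
  obtain ⟨n', i', hn', hn'm, hi', h⟩ := zeroOnesZero_infix_qsB hocc
  have := (qs_index_unique hcb hn hn' hi hi' h).1
  omega

/-- If `z ≥ 1` and `0 1^z 0` is in the language, then `z = c n + i` for unique `n ≥ 1`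
and `0 ≤ i < b n`; moreover `0 1^{c n + i} 0` is not a subword of `B m` for `m ≤ n`, and
every occurrence of `0 1^{c n + i} 0` in a point of the subshift is as a suffix of
`1^{c (n+1)} (∏_{j<i} (B n 1^{c n + j})^{a n}) (B n 1^{c n + i})^q 0` for some
`1 ≤ q ≤ a n`. -/
theorem qs_zero_ones_zero (a b c : ℕ → ℕ) (hQS : QShyp a b c)
    (z : ℕ) (hz : 1 ≤ z) (hin : ([false] ++ ones z ++ [false]) ∈ qsL a b c) :
    ∃ n i : ℕ, 1 ≤ n ∧ i < b n ∧ z = c n + i ∧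
      (∀ n' i' : ℕ, 1 ≤ n' → i' < b n' → z = c n' + i' → n' = n ∧ i' = i) ∧
      (∀ m, m ≤ n → ¬ (([false] ++ ones (c n + i) ++ [false]) <:+: qsB a b c m)) ∧
      (∀ x ∈ qsX a b c, ∀ t : ℤ,
        readWord x t (c n + i + 2) = [false] ++ ones (c n + i) ++ [false] →
        ∃ q : ℕ, 1 ≤ q ∧ q ≤ a n ∧
          readWord x (t + ((c n + i + 2 : ℕ) : ℤ) - ((qsOccWord a b c n i q).length : ℤ))
            (qsOccWord a b c n i q).length = qsOccWord a b c n i q) :=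
  qs_zero_ones_zero_general a b c hQS z hin
end

section
/- In the quasi-staircase subshift: if w is a right-special word, then at least one of the following holds: (i) w = 1^{|w|}; (ii) w is a suffix of 1^{c_n+i−1}(B_n 1^{c_n+i})^{a_n} for some n ≥ 1 and some 0 ≤ i < b_n; (iii) w is a suffix of 1^{c_n+b_n−1} B_n 1^{c_n} for some n ≥ 1; (iv) w = 1^{c_n} (B_n 1^{c_n})^{a_n} for some n ≥ 1. -/
open Filter MeasureTheory
open scoped ENNReal

/-!
Write a right-special word that is not a power of `1` as `w = u 0 1^z`. In an occurrence of `w0`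
inside some `B N` the run `1^z` is closed by a `0`, and unfolding `B N` level by level shows that
the part of `B N` before that `0` ends with a maximal power `(B n 1^(c n + i))^k`, `1 ≤ k ≤ a n`;
hence `z = c n + i`, and what precedes the power is a run of ones of a controlled length
(`BlockCtx`). In an occurrence of
`w1` the same run is continued, which happens only after a longer run of the same level or after
a complete power `(B n 1^(c n + i))^(a n)` (`OneTail`). Reading both occurrences from the right,
they first disagree at the left end of a run of ones, where one has a `0` and the other a `1`;
`w` ends before that letter, which bounds it by one of the words (ii)–(iv).
-/

namespace QShyp

variable {a b c : ℕ → ℕ}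

lemma one_le_a (h : QShyp a b c) {n : ℕ} (hn : 1 ≤ n) : 1 ≤ a n := (h.1 n hn).1

lemma one_le_b (h : QShyp a b c) {n : ℕ} (hn : 1 ≤ n) : 1 ≤ b n := (h.2.2.1 n hn).1

lemma c_add_b_le (h : QShyp a b c) {n : ℕ} (hn : 1 ≤ n) : c n + b n ≤ c (n + 1) :=
  h.2.2.2.2.2.2 n hn

lemma c_mono (h : QShyp a b c) {n m : ℕ} (hn : 1 ≤ n) (hnm : n ≤ m) : c n ≤ c m := by
  induction m, hnm using Nat.le_induction with
  | base => exact le_rfl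
  | succ m hm ih => exact ih.trans (h.2.2.2.2.1 m (hn.trans hm)).2

lemma c_add_b_le_of_lt (h : QShyp a b c) {n m : ℕ} (hn : 1 ≤ n) (hnm : n < m) :
    c n + b n ≤ c m :=
  (h.c_add_b_le hn).trans (h.c_mono (by omega) hnm)

end QShyp

namespace QuasiStaircase

open List

section Words

variable {α : Type*}

lemma concat_prefix_append {p u v : List α} {x : α} (h : p ++ [x] <+: u ++ v) :
    p ++ [x] <+: u ∨ ∃ r, p = u ++ r ∧ r ++ [x] <+: v := by
  rcases le_or_gt (p ++ [x]).length u.length with hl | hl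
  · exact Or.inl (prefix_of_prefix_length_le h (prefix_append u v) hl)
  · obtain ⟨r, hr⟩ := prefix_of_prefix_length_le (prefix_append u v) h hl.le
    obtain rfl | ⟨r, y, rfl⟩ := r.eq_nil_or_concat
    · simp [← hr] at hl
    · rw [concat_eq_append, ← append_assoc] at hr
      obtain ⟨rfl, -⟩ := append_inj' hr rfl
      refine Or.inr ⟨r, rfl, ?_⟩
      rwa [append_assoc, prefix_append_right_inj] at h

lemma concat_prefix_flatten {L : List (List α)} {p : List α} {x : α}
    (h : p ++ [x] <+: L.flatten) :
    ∃ i, ∃ hi : i < L.length, ∃ r, p = (L.take i).flatten ++ r ∧ r ++ [x] <+: L[i] := by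
  induction L generalizing p with
  | nil => simp at h
  | cons v L ih =>
    rw [flatten_cons] at h
    rcases concat_prefix_append h with h | ⟨r, rfl, hr⟩
    · exact ⟨0, by simp, p, by simp, h⟩
    · obtain ⟨i, hi, r', rfl, hr'⟩ := ih hr
      exact ⟨i + 1, by simpa using hi, r', by simp, hr'⟩

lemma suffix_of_suffix_cons_of_ne {w A B S : List α} {x y : α} (hx : w <:+ A ++ x :: S)
    (hy : w <:+ B ++ y :: S) (hxy : x ≠ y) : w <:+ S := by
  rcases le_or_gt w.length S.length with h | h
  · exact suffix_of_suffix_length_le hx (suffix_append_of_suffix (suffix_cons x S)) h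
  · have hxw : x :: S <:+ w := suffix_of_suffix_length_le (suffix_append A _) hx h
    have hxy' := suffix_of_suffix_length_le (hxw.trans hy) (suffix_append B (y :: S)) (by simp)
    exact absurd (by simpa using hxy'.eq_of_length (by simp)) hxy

@[simp] lemma wpow_zero (v : List α) : wpow v 0 = [] := rfl

lemma wpow_succ (v : List α) (k : ℕ) : wpow v (k + 1) = v ++ wpow v k := by
  simp [wpow, replicate_succ]

lemma wpow_succ' (v : List α) (k : ℕ) : wpow v (k + 1) = wpow v k ++ v := by
  simp [wpow, replicate_succ']

lemma wpow_add (v : List α) (s t : ℕ) : wpow v (s + t) = wpow v s ++ wpow v t := by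
  simp only [wpow, replicate_add, flatten_append]

lemma wpow_suffix_wpow (v : List α) {m k : ℕ} (h : m ≤ k) : wpow v m <:+ wpow v k :=
  ⟨wpow v (k - m), by rw [← wpow_add]; congr 1; omega⟩

lemma append_wpow_suffix_wpow_succ (x y : List α) (m : ℕ) :
    y ++ wpow (x ++ y) m <:+ wpow (x ++ y) (m + 1) :=
  ⟨x, by rw [wpow_succ, append_assoc]⟩

end Words

section Ones

@[simp] lemma length_ones (k : ℕ) : (ones k).length = k := length_replicate

lemma ones_add (s t : ℕ) : ones (s + t) = ones s ++ ones t := replicate_add s t true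

lemma false_notMem_ones (k : ℕ) : false ∉ ones k := by simp [ones]

lemma ones_append_suffix (S : List Bool) {s t : ℕ} (h : s ≤ t) :
    ones s ++ S <:+ ones t ++ S := by
  rw [suffix_append_self_iff]
  exact ⟨ones (t - s), by rw [← ones_add]; congr 1; omega⟩

lemma suffix_ones_pred_append_of_ne {w S : List Bool} {t : ℕ} (h : w <:+ ones t ++ S)
    (hne : w ≠ ones t ++ S) : w <:+ ones (t - 1) ++ S := by
  have hlt : w.length < (ones t ++ S).length :=
    lt_of_le_of_ne h.length_le fun hl => hne (h.eq_of_length hl)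
  refine suffix_of_suffix_length_le h (ones_append_suffix S (Nat.sub_le t 1)) ?_
  simp only [length_append, length_ones] at hlt ⊢
  omega

lemma ones_append_wpow_suffix (x : List Bool) {s t m l : ℕ}
    (h : t ≤ s - 1 ∧ m ≤ l ∨ t ≤ s ∧ m < l) :
    ones t ++ wpow (x ++ ones s) m <:+ ones (s - 1) ++ wpow (x ++ ones s) l := by
  by_cases hml : m < l
  · exact ((ones_append_suffix _ (by omega)).trans (append_wpow_suffix_wpow_succ x _ m)).trans
      ((wpow_suffix_wpow _ hml).trans (suffix_append _ _))
  · obtain rfl : m = l := by omega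
    exact ones_append_suffix _ (by omega)

lemma concat_prefix_ones {r : List Bool} {x : Bool} {m : ℕ} (h : r ++ [x] <+: ones m) :
    x = true ∧ r = ones r.length ∧ r.length < m := by
  have hr := eq_replicate_length.2 fun y hy => eq_of_mem_replicate (h.subset hy)
  have hl := h.length_le
  simp only [length_append, length_ones, length_singleton, replicate_succ'] at hr hl
  obtain ⟨hr, hx⟩ := append_inj' hr (by simp)
  exact ⟨by simpa using hx, hr, hl⟩

def zeroOnes (z : ℕ) : List Bool := false :: ones z

lemma eq_of_zeroOnes_suffix {p : List Bool} {z z' : ℕ} (h : zeroOnes z <:+ p)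
    (h' : zeroOnes z' <:+ p) : z = z' := by
  wlog hle : z ≤ z' generalizing z z'
  · exact (this h' h (by omega)).symm
  rcases suffix_cons_iff.1 (suffix_of_suffix_length_le h h' (by simp [zeroOnes, hle])) with
    he | hs
  · simpa [zeroOnes, ones] using he
  · exact absurd (hs.subset mem_cons_self) (false_notMem_ones z')

lemma zeroOnes_suffix_of_suffix_append {C q : List Bool} {z : ℕ} (hq : [false] <+: q)
    (hz : zeroOnes z <:+ C ++ q) : zeroOnes z <:+ q := by
  rcases suffix_or_suffix_of_suffix hz (suffix_append C q) with h | h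
  · exact h
  · rcases suffix_cons_iff.1 h with rfl | h
    · exact suffix_rfl
    · obtain ⟨t, rfl⟩ := hq
      exact absurd (h.subset mem_cons_self) (false_notMem_ones z)

lemma suffix_ones_append_of_zeroOnes {w p q S : List Bool} {s t : ℕ} (hwp : w <:+ p)
    (hwq : w <:+ q) (hp : zeroOnes s ++ S <:+ p) (hq : zeroOnes t ++ S <:+ q) (hst : s < t) :
    w <:+ ones s ++ S := by
  obtain ⟨A, rfl⟩ := hp
  obtain ⟨B, rfl⟩ := hq
  obtain ⟨d, rfl⟩ : ∃ d, t = d + (s + 1) := ⟨t - s - 1, by omega⟩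
  refine suffix_of_suffix_cons_of_ne (A := A) (B := B ++ false :: ones d) ?_ ?_ Bool.false_ne_true
  · simpa [zeroOnes] using hwp
  · have hd : ones (d + (s + 1)) = ones d ++ true :: ones s := by rw [ones_add]; rfl
    simpa [zeroOnes, hd] using hwq

lemma eq_ones_or_eq_append_zeroOnes (w : List Bool) :
    w = ones w.length ∨ ∃ u z, w = u ++ zeroOnes z := by
  induction w using reverseRecOn with
  | nil => exact Or.inl rfl
  | append_singleton w x ih =>
    cases x with
    | false => exact Or.inr ⟨w, 0, rfl⟩
    | true =>
      rcases ih with h | ⟨u, z, rfl⟩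
      · left
        conv_lhs => rw [h]
        simp [ones, replicate_succ']
      · exact Or.inr ⟨u, z + 1, by simp [zeroOnes, ones, replicate_succ']⟩

end Ones

section Staircase

variable (a b c : ℕ → ℕ)

def block (n i : ℕ) : List Bool := qsB a b c n ++ ones (c n + i)

def stair (n j : ℕ) : List Bool :=
  ((range j).map fun i => wpow (block a b c n i) (a n)).flatten

lemma qsB_succ {n : ℕ} (hn : 1 ≤ n) :
    qsB a b c (n + 1) = stair a b c n (b n) ++ qsB a b c n := by
  obtain ⟨m, rfl⟩ : ∃ m, n = m + 1 := ⟨n - 1, by omega⟩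
  rfl

@[simp] lemma stair_zero (n : ℕ) : stair a b c n 0 = [] := rfl

lemma stair_succ (n j : ℕ) :
    stair a b c n (j + 1) = stair a b c n j ++ wpow (block a b c n j) (a n) := by
  simp [stair, range_succ]

variable {a b c}

lemma exists_qsB_eq_append_false {n : ℕ} (hn : 1 ≤ n) : ∃ X, qsB a b c n = X ++ [false] := by
  induction n, hn using Nat.le_induction with
  | base => exact ⟨[], rfl⟩
  | succ m hm ih =>
    obtain ⟨X, hX⟩ := ih
    exact ⟨stair a b c m (b m) ++ X, by rw [qsB_succ a b c hm, hX, append_assoc]⟩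

lemma zeroOnes_append_wpow_suffix {n : ℕ} (hn : 1 ≤ n) (i : ℕ) {k m : ℕ} (hkm : k < m) :
    zeroOnes (c n + i) ++ wpow (block a b c n i) k <:+ wpow (block a b c n i) m := by
  obtain ⟨X, hX⟩ := exists_qsB_eq_append_false (a := a) (b := b) (c := c) hn
  have hB : block a b c n i = X ++ zeroOnes (c n + i) := by simp [block, hX, zeroOnes]
  rw [hB]
  exact (append_wpow_suffix_wpow_succ _ _ k).trans (wpow_suffix_wpow _ hkm)

lemma zeroOnes_suffix_stair_succ (h : QShyp a b c) {n : ℕ} (hn : 1 ≤ n) (j : ℕ) :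
    zeroOnes (c n + j) <:+ stair a b c n (j + 1) := by
  rw [stair_succ]
  exact suffix_append_of_suffix (by simpa using zeroOnes_append_wpow_suffix hn j (h.one_le_a hn))

lemma qsB_prefix_stair (h : QShyp a b c) {n j : ℕ} (hn : 1 ≤ n) (hj : 1 ≤ j) :
    qsB a b c n <+: stair a b c n j := by
  induction j, hj using Nat.le_induction with
  | base =>
    obtain ⟨k, hk⟩ : ∃ k, a n = k + 1 := ⟨a n - 1, by have := h.one_le_a hn; omega⟩
    rw [stair_succ, stair_zero, nil_append, hk, wpow_succ, block, append_assoc]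
    exact prefix_append _ _
  | succ j _ ih => exact ih.trans (stair_succ a b c n j ▸ prefix_append _ _)

lemma false_prefix_qsB (h : QShyp a b c) {n : ℕ} (hn : 1 ≤ n) : [false] <+: qsB a b c n := by
  induction n, hn using Nat.le_induction with
  | base => exact prefix_rfl
  | succ m hm ih =>
    rw [qsB_succ a b c hm]
    exact ih.trans ((qsB_prefix_stair h hm (h.one_le_b hm)).trans (prefix_append _ _))

lemma qsB_suffix_qsB {n m : ℕ} (hn : 1 ≤ n) (hnm : n ≤ m) : qsB a b c n <:+ qsB a b c m := by
  induction m, hnm using Nat.le_induction with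
  | base => exact suffix_rfl
  | succ m hm ih => exact ih.trans (qsB_succ a b c (hn.trans hm) ▸ suffix_append _ _)

lemma eq_nil_of_concat_prefix_qsB_one {p : List Bool} {x : Bool}
    (hp : p ++ [x] <+: qsB a b c 1) : p = [] := by
  simpa [qsB] using hp.length_le

lemma concat_prefix_qsB_succ {N : ℕ} (hN : 1 ≤ N) {p : List Bool} {x : Bool}
    (hp : p ++ [x] <+: qsB a b c (N + 1)) :
    (∃ j k p', (j < b N ∧ k < a N ∨ j = b N ∧ k = 0) ∧
        p = stair a b c N j ++ wpow (block a b c N j) k ++ p' ∧ p' ++ [x] <+: qsB a b c N) ∨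
    (x = true ∧ ∃ j k t, j < b N ∧ k < a N ∧ t < c N + j ∧
        p = stair a b c N j ++ wpow (block a b c N j) k ++ qsB a b c N ++ ones t) := by
  rw [qsB_succ a b c hN] at hp
  rcases concat_prefix_append hp with hp | ⟨p', rfl, hp'⟩
  · obtain ⟨j, hj, r, rfl, hr⟩ := concat_prefix_flatten hp
    obtain ⟨k, hk, r', rfl, hr'⟩ := concat_prefix_flatten (by simpa [wpow] using hr)
    simp only [length_map, length_range, length_replicate] at hj hk
    have hstair : (((range (b N)).map fun i => wpow (block a b c N i) (a N)).take j).flatten =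
        stair a b c N j := by
      simp [stair, ← map_take, Nat.min_eq_left hj.le]
    have hwpow : ((replicate (a N) (block a b c N j)).take k).flatten =
        wpow (block a b c N j) k := by
      simp [wpow, Nat.min_eq_left hk.le]
    simp only [getElem_replicate, block] at hr'
    rcases concat_prefix_append hr' with hr' | ⟨t, rfl, ht⟩
    · exact Or.inl ⟨j, k, r', Or.inl ⟨hj, hk⟩, by rw [hstair, hwpow, append_assoc], hr'⟩
    · obtain ⟨rfl, ht, htlt⟩ := concat_prefix_ones ht
      refine Or.inr ⟨rfl, j, k, t.length, hj, hk, htlt, ?_⟩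
      rw [hstair, hwpow, ← ht, append_assoc, append_assoc]
  · exact Or.inl ⟨b N, 0, p', Or.inr ⟨rfl, rfl⟩, by simp, hp'⟩

end Staircase

section Decomposition

variable {a b c : ℕ → ℕ}

variable (b c) in
/-- What can stand before a maximal power `(B n 1^(c n + i))^k` inside some `B N`: nothing, the
last run `1^(c n + i - 1)` of the previous power, or (only for `i = 0`) a run of a higher level. -/
inductive BlockCtx (n : ℕ) : ℕ → List Bool → Prop
  | nil : BlockCtx n 0 []
  | prev {i : ℕ} {P : List Bool} : zeroOnes (c n + i) <:+ P → BlockCtx n (i + 1) P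
  | high {e : ℕ} {P : List Bool} : c n + b n ≤ e → zeroOnes e <:+ P → BlockCtx n 0 P

lemma BlockCtx.append {n i : ℕ} {C P : List Bool} (hC : BlockCtx b c n 0 C)
    (hP : BlockCtx b c n i P) : BlockCtx b c n i (C ++ P) := by
  cases hP with
  | nil => simpa using hC
  | prev h => exact .prev (suffix_append_of_suffix h)
  | high he h => exact .high he (suffix_append_of_suffix h)

lemma blockCtx_stair (h : QShyp a b c) {n : ℕ} (hn : 1 ≤ n) :
    ∀ j, BlockCtx b c n j (stair a b c n j)
  | 0 => .nil
  | j + 1 => .prev (zeroOnes_suffix_stair_succ h hn j)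

lemma blockCtx_zero_of_lt (h : QShyp a b c) {n N : ℕ} (hn : 1 ≤ n) (hnN : n < N) (j k : ℕ) :
    BlockCtx b c n 0 (stair a b c N j ++ wpow (block a b c N j) k) := by
  have hcN := h.c_add_b_le_of_lt hn hnN
  rcases Nat.eq_zero_or_pos k with rfl | hk
  · rcases j with _ | j
    · exact .nil
    · exact .high (e := c N + j) (by omega)
        (by simpa using zeroOnes_suffix_stair_succ h (n := N) (by omega) j)
  · exact .high (e := c N + j) (by omega) (suffix_append_of_suffix
      (by simpa using zeroOnes_append_wpow_suffix (a := a) (n := N) (by omega) j hk))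

theorem exists_blockCtx_of_concat_false_prefix (h : QShyp a b c) {N : ℕ} (hN : 1 ≤ N)
    {p : List Bool} (hp : p ++ [false] <+: qsB a b c N) (hne : p ≠ []) :
    ∃ n i k P, 1 ≤ n ∧ n < N ∧ i < b n ∧ 1 ≤ k ∧ k ≤ a n ∧
      p = P ++ wpow (block a b c n i) k ∧ BlockCtx b c n i P := by
  induction N, hN using Nat.le_induction generalizing p with
  | base => exact absurd (eq_nil_of_concat_prefix_qsB_one hp) hne
  | succ N hN ih =>
    rcases concat_prefix_qsB_succ hN hp with ⟨j, k, p', hjk, rfl, hp'⟩ | ⟨hx, -⟩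
    · by_cases hp'0 : p' = []
      · subst hp'0
        rcases Nat.eq_zero_or_pos k with rfl | hk
        · rcases j with _ | j
          · simp at hne
          refine ⟨N, j, a N, stair a b c N j, hN, by omega, by omega, h.one_le_a hN, le_rfl,
            by simp [stair_succ], blockCtx_stair h hN j⟩
        · refine ⟨N, j, k, stair a b c N j, hN, by omega, by omega, hk, by omega,
            by simp, blockCtx_stair h hN j⟩
      · obtain ⟨n, i, k', P, hn, hnN, hi, hk1, hka, rfl, hP⟩ := ih hp' hp'0
        exact ⟨n, i, k', stair a b c N j ++ wpow (block a b c N j) k ++ P, hn, by omega, hi,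
          hk1, hka, by simp, (blockCtx_zero_of_lt h hn hnN j k).append hP⟩
    · exact absurd hx Bool.false_ne_true

variable (a b c) in
/-- Where a block `B n 1^(c n + i)` can be followed by a `1` inside some `B N`: after a longer run
of the same level, or as an `(a n + 1)`-st copy, cut inside the run `1^(c n + i + 1)` that follows
the full power `(B n 1^(c n + i))^(a n)`. -/
def OneTail (n i : ℕ) (q : List Bool) : Prop :=
  (∃ Q r, c n + i < r ∧ r < c n + b n ∧ zeroOnes r <:+ Q ∧ q = Q ++ block a b c n i) ∨
    ∃ Q, q = Q ++ wpow (block a b c n i) (a n + 1)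

lemma OneTail.append_left {n i : ℕ} {q : List Bool} (hq : OneTail a b c n i q) (C : List Bool) :
    OneTail a b c n i (C ++ q) := by
  rcases hq with ⟨Q, r, hr1, hr2, hQ, rfl⟩ | ⟨Q, rfl⟩
  · exact Or.inl ⟨C ++ Q, r, hr1, hr2, suffix_append_of_suffix hQ, by simp⟩
  · exact Or.inr ⟨C ++ Q, by simp⟩

lemma oneTail_stair (h : QShyp a b c) {n i j k : ℕ} (hn : 1 ≤ n) (hij : i < j) (hj : j ≤ b n)
    (hk : k = 0 ∨ j < b n) (X : List Bool) :
    OneTail a b c n i (X ++ stair a b c n j ++ wpow (block a b c n j) k ++ block a b c n i) := by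
  rcases Nat.eq_zero_or_pos k with rfl | hk1
  · obtain ⟨j, rfl⟩ : ∃ j', j = j' + 1 := ⟨j - 1, by omega⟩
    rcases Nat.lt_or_ge i j with hij' | hji
    · exact Or.inl ⟨X ++ stair a b c n (j + 1), c n + j, by omega, by omega,
        suffix_append_of_suffix (zeroOnes_suffix_stair_succ h hn j), by simp⟩
    · obtain rfl : i = j := by omega
      exact Or.inr ⟨X ++ stair a b c n i, by simp [stair_succ, wpow_succ']⟩
  · refine Or.inl ⟨X ++ stair a b c n j ++ wpow (block a b c n j) k, c n + j, by omega, by omega,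
      suffix_append_of_suffix ?_, rfl⟩
    simpa using zeroOnes_append_wpow_suffix hn j hk1

theorem oneTail_of_concat_true_prefix (h : QShyp a b c) {n i : ℕ} (hn : 1 ≤ n) (hi : i < b n)
    {N : ℕ} (hN : 1 ≤ N) {q : List Bool} (hq : q ++ [true] <+: qsB a b c N)
    (hz : zeroOnes (c n + i) <:+ q) : OneTail a b c n i q := by
  induction N, hN using Nat.le_induction generalizing q with
  | base => simp [eq_nil_of_concat_prefix_qsB_one hq, zeroOnes] at hz
  | succ N hN ih =>
    rcases concat_prefix_qsB_succ hN hq with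
      ⟨j, k, q', -, rfl, hq'⟩ | ⟨-, j, k, t, hj, hk, ht, rfl⟩
    · have hq'0 : [false] <+: q' := by
        rcases prefix_concat_iff.1 (prefix_of_prefix_length_le (false_prefix_qsB h hN) hq'
          (by simp)) with h0 | h0
        · exact absurd (congrArg getLast? h0) (by simp)
        · exact h0
      exact (ih hq' (zeroOnes_suffix_of_suffix_append hq'0 hz)).append_left _
    · obtain ⟨X, hX⟩ := exists_qsB_eq_append_false (a := a) (b := b) (c := c) hN
      obtain rfl : t = c n + i :=
        eq_of_zeroOnes_suffix
          ⟨stair a b c N j ++ wpow (block a b c N j) k ++ X, by simp [hX, zeroOnes]⟩ hz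
      have hnN : n ≤ N := by
        by_contra! hNn
        have := h.c_mono (n := N + 1) (m := n) (by omega) hNn
        have := h.c_add_b_le hN
        omega
      rcases hnN.eq_or_lt with rfl | hnN
      · simpa [block, append_assoc] using oneTail_stair h hn (by omega) hj.le (Or.inr hj) []
      · obtain ⟨Y, hY⟩ :=
          qsB_suffix_qsB (a := a) (b := b) (c := c) (show 1 ≤ n + 1 by omega) hnN
        rw [← hY, qsB_succ a b c hn]
        simpa [block, append_assoc] using oneTail_stair h hn hi le_rfl (Or.inl rfl)
          (stair a b c N j ++ wpow (block a b c N j) k ++ Y)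

end Decomposition

section Forms

variable {a b c : ℕ → ℕ} {n i k : ℕ} {w q P : List Bool}

lemma forms_of_single_block (hn : 1 ≤ n) (hwp : w <:+ P ++ wpow (block a b c n i) k)
    (hwq : w <:+ q) (hP : BlockCtx b c n i P) (hk1 : 1 ≤ k) (hka : k ≤ a n) {Q : List Bool}
    {r : ℕ} (hr : c n + i < r) (hrb : r < c n + b n) (hQ : zeroOnes r <:+ Q)
    (hq : q = Q ++ wpow (block a b c n i) 1) :
    w <:+ ones (c n + i - 1) ++ wpow (block a b c n i) (a n) ∨
      w <:+ ones (c n + b n - 1) ++ qsB a b c n ++ ones (c n) := by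
  have hq' : zeroOnes r ++ wpow (block a b c n i) 1 <:+ q := hq ▸ suffix_append_self_iff.2 hQ
  obtain hk2 | rfl : 1 < k ∨ k = 1 := by omega
  · have hp' : zeroOnes (c n + i) ++ wpow (block a b c n i) 1 <:+
        P ++ wpow (block a b c n i) k :=
      suffix_append_of_suffix (zeroOnes_append_wpow_suffix hn i hk2)
    exact Or.inl ((suffix_ones_append_of_zeroOnes hwp hwq hp' hq' hr).trans
      (ones_append_wpow_suffix _ (Or.inr ⟨le_rfl, by omega⟩)))
  cases hP with
  | nil =>
    exact Or.inl ((hwp.trans (wpow_suffix_wpow _ hka)).trans (suffix_append _ _))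
  | prev hs =>
    exact Or.inl ((suffix_ones_append_of_zeroOnes hwp hwq (suffix_append_self_iff.2 hs) hq'
      (by omega)).trans (ones_append_wpow_suffix _ (Or.inl ⟨by omega, hka⟩)))
  | high he hs =>
    refine Or.inr ((suffix_ones_append_of_zeroOnes hwq hwp hq' (suffix_append_self_iff.2 hs)
      (by omega)).trans ?_)
    simpa [block, wpow, append_assoc] using
      ones_append_suffix (qsB a b c n ++ ones (c n)) (show r ≤ c n + b n - 1 by omega)

lemma forms_of_full_row (hn : 1 ≤ n) (hi : i < b n)
    (hwp : w <:+ P ++ wpow (block a b c n i) k) (hwq : w <:+ q) (hP : BlockCtx b c n i P)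
    (hka : k ≤ a n) {Q : List Bool}
    (hq : q = Q ++ wpow (block a b c n i) (a n + 1)) :
    w <:+ ones (c n + i - 1) ++ wpow (block a b c n i) (a n) ∨
      w = ones (c n) ++ wpow (block a b c n 0) (a n) := by
  have hq' : zeroOnes (c n + i) ++ wpow (block a b c n i) k <:+ q :=
    hq ▸ suffix_append_of_suffix (zeroOnes_append_wpow_suffix hn i (by omega))
  cases hP with
  | nil =>
    exact Or.inl ((hwp.trans (wpow_suffix_wpow _ hka)).trans (suffix_append _ _))
  | prev hs =>
    exact Or.inl ((suffix_ones_append_of_zeroOnes hwp hwq (suffix_append_self_iff.2 hs) hq'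
      (by omega)).trans (ones_append_wpow_suffix _ (Or.inl ⟨by omega, hka⟩)))
  | high he hs =>
    have hw := suffix_ones_append_of_zeroOnes hwq hwp hq' (suffix_append_self_iff.2 hs)
      (by omega)
    rcases hka.lt_or_eq with hka | rfl
    · exact Or.inl (hw.trans (ones_append_wpow_suffix _ (Or.inr ⟨le_rfl, hka⟩)))
    · by_cases hweq : w = ones (c n + 0) ++ wpow (block a b c n 0) (a n)
      · exact Or.inr hweq
      · exact Or.inl (suffix_ones_pred_append_of_ne hw hweq)

end Forms

lemma exists_concat_prefix_qsB {a b c : ℕ → ℕ} {w : List Bool} {x : Bool}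
    (hw : w ++ [x] ∈ qsL a b c) :
    ∃ N, 1 ≤ N ∧ ∃ p, w <:+ p ∧ p ++ [x] <+: qsB a b c N := by
  obtain ⟨N, hN, s, t, hst⟩ := hw
  exact ⟨N, hN, s ++ w, suffix_append s w, t, by simpa [append_assoc] using hst⟩

end QuasiStaircase

open List QuasiStaircase

/-- Every right-special word of the quasi-staircase subshift has (at least) one of the
four forms: (i) `1^{|w|}`; (ii) a suffix of `1^{c n + i - 1} (B n 1^{c n + i})^{a n}`
for some `n ≥ 1`, `0 ≤ i < b n`; (iii) a suffix of `1^{c n + b n - 1} B n 1^{c n}`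
for some `n ≥ 1`; (iv) `1^{c n} (B n 1^{c n})^{a n}` for some `n ≥ 1`. -/
theorem qs_right_special_forms (a b c : ℕ → ℕ) (hQS : QShyp a b c)
    (w : List Bool) (hw : RS a b c w) :
    w = ones w.length ∨
    (∃ n, 1 ≤ n ∧ ∃ i, i < b n ∧
      w <:+ ones (c n + i - 1) ++ wpow (qsB a b c n ++ ones (c n + i)) (a n)) ∨
    (∃ n, 1 ≤ n ∧ w <:+ ones (c n + b n - 1) ++ qsB a b c n ++ ones (c n)) ∨
    (∃ n, 1 ≤ n ∧ w = ones (c n) ++ wpow (qsB a b c n ++ ones (c n)) (a n)) := by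
  obtain ⟨-, hw0, hw1⟩ := hw
  rcases eq_ones_or_eq_append_zeroOnes w with hones | ⟨u, z, rfl⟩
  · exact Or.inl hones
  obtain ⟨N, hN, p, hwp, hp⟩ := exists_concat_prefix_qsB hw0
  obtain ⟨M, hM, q, hwq, hq⟩ := exists_concat_prefix_qsB hw1
  obtain ⟨n, i, k, P, hn, -, hi, hk1, hka, rfl, hP⟩ :=
    exists_blockCtx_of_concat_false_prefix hQS hN hp (by rintro rfl; simp [zeroOnes] at hwp)
  obtain rfl : z = c n + i := eq_of_zeroOnes_suffix ((suffix_append u _).trans hwp)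
    (suffix_append_of_suffix (by simpa using zeroOnes_append_wpow_suffix hn i hk1))
  rcases oneTail_of_concat_true_prefix hQS hn hi hM hq ((suffix_append u _).trans hwq) with
    ⟨Q, r, hr, hrb, hQ, rfl⟩ | ⟨Q, rfl⟩
  · rcases forms_of_single_block hn hwp hwq hP hk1 hka hr hrb hQ (by simp [wpow]) with h | h
    · exact Or.inr (Or.inl ⟨n, hn, i, hi, h⟩)
    · exact Or.inr (Or.inr (Or.inl ⟨n, hn, h⟩))
  · rcases forms_of_full_row hn hi hwp hwq hP hka rfl with h | h
    · exact Or.inr (Or.inl ⟨n, hn, i, hi, h⟩)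
    · exact Or.inr (Or.inr (Or.inr ⟨n, hn, h⟩))
end

section
/- Let (d_n) be a nondecreasing sequence of positive integers with d_n → ∞, d_1 = d_2 = 1, d_{n+1} − d_n ∈ {0,1} for all n, and d_{n+1} − d_n never equal to 1 for two consecutive values of n. Let (b_n) be a nondecreasing sequence of integers with b_n → ∞, b_1 = 3 and b_n ≤ n + 2 for all n. Set a_n = 2n + 2, c_1 = 1, and for n > 1 set c_n = m_{n−d_n} if d_n = d_{n−1} and c_n = c_{n−1} + b_{n−1} if d_n = d_{n−1} + 1, where h_1 = 1, h_{n+1} = (a_n b_n + 1)h_n + a_n b_n c_n + a_n b_n(b_n−1)/2 and m_n = a_n h_n + (a_n+1)(c_n + b_n − 1). Then c_{n+1} ≥ c_n + b_n for all n (so (a_n), (b_n), (c_n) define a quasi-staircase), a_n b_n² / h_n → 0, and Σ_n (c_n + b_n)/h_n < ∞. -/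
/-!
Since `a n * b n ≥ 6 (n + 1)`, the heights satisfy `h (n+1) ≥ (6 n + 6) h n`; in particular they
grow geometrically, which beats the cubic numerator `a n * b n ^ 2`.

As `d` never jumps twice in a row, `2 d n ≤ n + 1`, so `e = n - d n` satisfies `n ≤ 2 e + 1`,
and `c n ≤ m e + b (n-1)`. The increment `m (e+1) - m e`, of order `h e`, absorbs `b (n-1) + b n`;
hence `c n + b n ≤ m (e+1)`, which is the staircase inequality in both cases of the definition
of `c (n+1)`. Moreover `m (e+1) ≤ h (e+2)`, and climbing the `d n - 2 ≥ 2` steps from `e + 2` to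
`n` multiplies the height by at least `n ^ 2`, so `(c n + b n) / h n ≤ 1 / n ^ 2` eventually.
-/

open Filter

section Steps

variable {d : ℕ → ℕ}

lemma add_two_le_add_one_of_no_consecutive_steps
    (hdstep : ∀ n, 1 ≤ n → d n ≤ d (n+1) ∧ d (n+1) ≤ d n + 1)
    (hdnoconsec : ∀ n, 1 ≤ n → d (n+1) = d n + 1 → d (n+2) = d (n+1))
    {n : ℕ} (hn : 1 ≤ n) : d (n+2) ≤ d n + 1 := by
  have h₁ := hdstep n hn
  have h₂ : d (n+1) ≤ d (n+2) ∧ d (n+2) ≤ d (n+1) + 1 := hdstep (n+1) (by omega)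
  by_cases hjump : d (n+1) = d n + 1
  · have := hdnoconsec n hn hjump
    omega
  · omega

lemma two_mul_le_add_one_of_no_consecutive_steps (hd1 : d 1 = 1) (hd2 : d 2 = 1)
    (hdstep : ∀ n, 1 ≤ n → d n ≤ d (n+1) ∧ d (n+1) ≤ d n + 1)
    (hdnoconsec : ∀ n, 1 ≤ n → d (n+1) = d n + 1 → d (n+2) = d (n+1)) :
    ∀ n, 1 ≤ n → 2 * d n ≤ n + 1
  | 1, _ => by omega
  | 2, _ => by omega
  | n + 3, _ => by
    have := two_mul_le_add_one_of_no_consecutive_steps hd1 hd2 hdstep hdnoconsec (n+1) (by omega)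
    have : d (n+3) ≤ d (n+1) + 1 :=
      add_two_le_add_one_of_no_consecutive_steps hdstep hdnoconsec (n := n+1) (by omega)
    omega

end Steps

lemma pow_mul_le_of_mul_le_succ {u : ℕ → ℕ} {k j : ℕ}
    (hu : ∀ n, j ≤ n → k * u n ≤ u (n+1)) : ∀ s, k ^ s * u j ≤ u (j + s)
  | 0 => by simp
  | s + 1 => calc
      k ^ (s+1) * u j = k * (k ^ s * u j) := by ring
      _ ≤ k * u (j + s) := Nat.mul_le_mul_left k (pow_mul_le_of_mul_le_succ hu s)
      _ ≤ u (j + (s+1)) := hu (j + s) (by omega)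

section Growth

variable {h : ℕ → ℕ}

lemma pow_pred_le_of_growth (hh1 : h 1 = 1)
    (hgrowth : ∀ n, 1 ≤ n → (6*n+6) * h n ≤ h (n+1)) {n : ℕ} (hn : 1 ≤ n) :
    12 ^ (n-1) ≤ h n := by
  have := pow_mul_le_of_mul_le_succ (u := h) (k := 12) (j := 1)
    (fun n hn => (Nat.mul_le_mul_right _ (by omega)).trans (hgrowth n hn)) (n-1)
  rwa [hh1, mul_one, Nat.add_sub_cancel' hn] at this

lemma sq_mul_le_of_growth (hgrowth : ∀ n, 1 ≤ n → (6*n+6) * h n ≤ h (n+1))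
    {j n : ℕ} (hj : 1 ≤ j) (hjn : j + 2 ≤ n) (hnj : n ≤ 2 * j) : n ^ 2 * h j ≤ h n := by
  have := pow_mul_le_of_mul_le_succ (u := h) (k := 6*j+6) (j := j)
    (fun i hi => (Nat.mul_le_mul_right _ (by omega)).trans (hgrowth i (by omega))) (n-j)
  rw [Nat.add_sub_cancel' (by omega)] at this
  calc n ^ 2 * h j ≤ (6*j+6) ^ (n-j) * h j := by
        refine Nat.mul_le_mul_right _ ?_
        calc n ^ 2 ≤ (6*j+6) ^ 2 := by gcongr; omega
          _ ≤ (6*j+6) ^ (n-j) := Nat.pow_le_pow_right (by omega) (by omega)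
    _ ≤ h n := this

end Growth

lemma tendsto_div_of_le_const_mul_pow {x y : ℕ → ℕ} {C k r : ℕ} (hr : 1 < r)
    (hx : ∀ n, 1 ≤ n → x n ≤ C * n ^ k) (hy : ∀ n, 1 ≤ n → r ^ (n-1) ≤ y n) :
    Tendsto (fun n => (x n : ℝ) / y n) atTop (nhds 0) := by
  have hlim := (tendsto_pow_const_div_const_pow_of_one_lt k (r := r)
    (by exact_mod_cast hr)).const_mul ((C * r : ℕ) : ℝ)
  rw [mul_zero] at hlim
  refine tendsto_of_tendsto_of_tendsto_of_le_of_le' tendsto_const_nhds hlim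
    (Eventually.of_forall fun n => by positivity) ?_
  filter_upwards [eventually_ge_atTop 1] with n hn
  have hpow : (r : ℝ) ^ n = r * r ^ (n-1) := by
    rw [← pow_succ', Nat.sub_add_cancel hn]
  have hrpos : (0 : ℝ) < r ^ (n-1) := by positivity
  have hyn : (r : ℝ) ^ (n-1) ≤ y n := by exact_mod_cast hy n hn
  calc (x n : ℝ) / y n ≤ (C * n ^ k : ℕ) / r ^ (n-1) :=
        div_le_div₀ (by positivity) (by exact_mod_cast hx n hn) hrpos hyn
    _ = ((C * r : ℕ) : ℝ) * (n ^ k / r ^ n) := by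
        rw [hpow]; push_cast; field_simp

lemma summable_div_of_sq_mul_le {x y : ℕ → ℕ} (hxy : ∀ᶠ n in atTop, n ^ 2 * x n ≤ y n) :
    Summable (fun n => (x n : ℝ) / y n) := by
  refine .of_norm_bounded_eventually_nat (Real.summable_one_div_nat_pow.mpr one_lt_two) ?_
  filter_upwards [hxy, eventually_ge_atTop 1] with n hn hn1
  rw [Real.norm_of_nonneg (by positivity)]
  rcases (y n).eq_zero_or_pos with hy | hy
  · simp [hy]
  · rw [div_le_div_iff₀ (by exact_mod_cast hy) (by positivity)]
    exact_mod_cast (by linarith : x n * n ^ 2 ≤ 1 * y n)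

section Construction

variable {a b c d h m : ℕ → ℕ}

lemma height_growth (ha : ∀ n, a n = 2 * n + 2) (hb3 : ∀ n, 1 ≤ n → 3 ≤ b n)
    (hh : ∀ n, 1 ≤ n →
      h (n+1) = (a n * b n + 1) * h n + a n * b n * c n + a n * b n * (b n - 1) / 2)
    {n : ℕ} (hn : 1 ≤ n) : (6*n+6) * h n ≤ h (n+1) := by
  have hab : 6*n+6 ≤ a n * b n := by rw [ha]; nlinarith [hb3 n hn]
  have := Nat.mul_le_mul_right (h n) (show 6*n+6 ≤ a n * b n + 1 by omega)
  rw [hh n hn]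
  omega

lemma m_le_height_succ (ha : ∀ n, a n = 2 * n + 2) {e : ℕ} (hb3 : 3 ≤ b e)
    (hh : h (e+1) = (a e * b e + 1) * h e + a e * b e * c e + a e * b e * (b e - 1) / 2)
    (hm : m e = a e * h e + (a e + 1) * (c e + b e - 1)) : m e ≤ h (e+1) := by
  obtain ⟨β, hβ⟩ : ∃ β, b e = β + 3 := ⟨b e - 3, by omega⟩
  rw [hβ, show β + 3 - 1 = β + 2 by omega] at hh
  rw [hβ, show c e + (β + 3) - 1 = c e + (β + 2) by omega] at hm
  have hhalf : (2*e+2) * (β+3) * (β+2) / 2 = (e+1) * (β+3) * (β+2) := by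
    rw [show (2*e+2) * (β+3) * (β+2) = 2 * ((e+1) * (β+3) * (β+2)) by ring]
    exact Nat.mul_div_cancel_left _ two_pos
  rw [hm, hh, ha, hhalf]
  nlinarith [Nat.zero_le (β * h e), Nat.zero_le (e * β * c e), Nat.zero_le (e * β * β)]

lemma m_add_le_m_succ (ha : ∀ n, a n = 2 * n + 2)
    (hm : ∀ n, m n = a n * h n + (a n + 1) * (c n + b n - 1)) {e : ℕ}
    (hgrowth : 12 * h e ≤ h (e+1)) (hpos : 1 ≤ h e)
    (hcb : c e + b e ≤ c (e+1)) :
    m e + (4*e+5) ≤ m (e+1) := by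
  rw [hm, hm, ha, ha]
  have hcb' : c e + b e - 1 ≤ c (e+1) + b (e+1) - 1 := by omega
  have hh' : (2*e+2) * h e + (4*e+5) ≤ (2*(e+1)+2) * h (e+1) := by nlinarith
  nlinarith [Nat.mul_le_mul (show 2*e+2+1 ≤ 2*(e+1)+2+1 by omega) hcb']

lemma c_le_m_add_b (hd1 : d 1 = 1) (hd2 : d 2 = 1)
    (hdstep : ∀ n, 1 ≤ n → d n ≤ d (n+1) ∧ d (n+1) ≤ d n + 1)
    (hdnoconsec : ∀ n, 1 ≤ n → d (n+1) = d n + 1 → d (n+2) = d (n+1))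
    (hc : ∀ n, 1 < n → c n = if d n = d (n-1) then m (n - d n) else c (n-1) + b (n-1))
    {n : ℕ} (hn : 2 ≤ n) : c n ≤ m (n - d n) + b (n-1) := by
  by_cases hstay : d n = d (n-1)
  · rw [hc n hn, if_pos hstay]
    exact Nat.le_add_right _ _
  obtain ⟨k, rfl⟩ : ∃ k, n = k + 3 := ⟨n - 3, by
    have : n ≠ 2 := by rintro rfl; exact hstay (by rw [hd1, hd2])
    omega⟩
  have hcn : c (k+3) = if d (k+3) = d (k+2) then m (k + 3 - d (k+3)) else c (k+2) + b (k+2) :=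
    hc (k+3) (by omega)
  have hcn' : c (k+2) = if d (k+2) = d (k+1) then m (k + 2 - d (k+2)) else c (k+1) + b (k+1) :=
    hc (k+2) (by omega)
  change ¬d (k+3) = d (k+2) at hstay
  have hjump : d (k+3) = d (k+2) + 1 := by
    have : d (k+2) ≤ d (k+3) ∧ d (k+3) ≤ d (k+2) + 1 := hdstep (k+2) (by omega)
    omega
  have hstay' : d (k+2) = d (k+1) := by
    have : d (k+1) ≤ d (k+2) ∧ d (k+2) ≤ d (k+1) + 1 := hdstep (k+1) (by omega)
    by_contra hne
    exact hstay (hdnoconsec (k+1) (by omega) (show d (k+2) = d (k+1) + 1 by omega))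
  rw [hcn, if_neg hstay, hcn', if_pos hstay', show k + 3 - d (k+3) = k + 2 - d (k+2) by omega]
  rfl

lemma c_add_b_le_c_succ
    (hc : ∀ n, 1 < n → c n = if d n = d (n-1) then m (n - d n) else c (n-1) + b (n-1))
    {n : ℕ} (hn : 1 ≤ n) (hcm : c n + b n ≤ m (n + 1 - d n)) : c n + b n ≤ c (n+1) := by
  rw [hc (n+1) (by omega), Nat.add_sub_cancel]
  by_cases hstay : d (n+1) = d n
  · rwa [if_pos hstay, hstay]
  · rw [if_neg hstay]

lemma c_add_b_le_m (hd1 : d 1 = 1) (hd2 : d 2 = 1) (hdpos : ∀ n, 1 ≤ n → 1 ≤ d n)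
    (hdstep : ∀ n, 1 ≤ n → d n ≤ d (n+1) ∧ d (n+1) ≤ d n + 1)
    (hdnoconsec : ∀ n, 1 ≤ n → d (n+1) = d n + 1 → d (n+2) = d (n+1))
    (hb3 : ∀ n, 1 ≤ n → 3 ≤ b n) (hble : ∀ n, 1 ≤ n → b n ≤ n + 2)
    (ha : ∀ n, a n = 2 * n + 2) (hpos : ∀ n, 1 ≤ n → 1 ≤ h n)
    (hgrowth : ∀ n, 1 ≤ n → (6*n+6) * h n ≤ h (n+1))
    (hm : ∀ n, m n = a n * h n + (a n + 1) * (c n + b n - 1))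
    (hc : ∀ n, 1 < n → c n = if d n = d (n-1) then m (n - d n) else c (n-1) + b (n-1)) :
    ∀ n, 1 ≤ n → c n + b n ≤ m (n + 1 - d n) := by
  intro n hn
  induction n using Nat.strong_induction_on with
  | _ n ih =>
  rcases hn.eq_or_lt with rfl | hn2
  · have := hb3 1 le_rfl
    rw [hd1, show 1 + 1 - 1 = 1 from rfl, hm, ha]
    omega
  have hdn := two_mul_le_add_one_of_no_consecutive_steps hd1 hd2 hdstep hdnoconsec n hn
  have hdn1 := hdpos n hn
  obtain ⟨e, he⟩ : ∃ e, n - d n = e := ⟨_, rfl⟩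
  have he1 : 1 ≤ e := by omega
  have hstair : c e + b e ≤ c (e+1) := c_add_b_le_c_succ hc he1 (ih e (by omega) he1)
  have hmstep := m_add_le_m_succ ha hm
    ((Nat.mul_le_mul_right _ (by omega)).trans (hgrowth e he1)) (hpos e he1) hstair
  have hcn := he ▸ c_le_m_add_b hd1 hd2 hdstep hdnoconsec hc hn2
  have := hble n hn
  have := hble (n-1) (by omega)
  rw [show n + 1 - d n = e + 1 by omega]
  omega

end Construction

theorem qs_sequences_construction_general (d b : ℕ → ℕ)
    (hd1 : d 1 = 1) (hd2 : d 2 = 1)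
    (hdpos : ∀ n, 1 ≤ n → 1 ≤ d n)
    (hdstep : ∀ n, 1 ≤ n → d n ≤ d (n+1) ∧ d (n+1) ≤ d n + 1)
    (hdnoconsec : ∀ n, 1 ≤ n → d (n+1) = d n + 1 → d (n+2) = d (n+1))
    (hdtop : Tendsto d atTop atTop)
    (hb1 : b 1 = 3)
    (hbmono : ∀ n, 1 ≤ n → b n ≤ b (n+1))
    (hble : ∀ n, 1 ≤ n → b n ≤ n + 2)
    (a c h m : ℕ → ℕ)
    (ha : ∀ n, a n = 2 * n + 2)
    (hh1 : h 1 = 1)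
    (hh : ∀ n, 1 ≤ n →
      h (n+1) = (a n * b n + 1) * h n + a n * b n * c n + a n * b n * (b n - 1) / 2)
    (hm : ∀ n, m n = a n * h n + (a n + 1) * (c n + b n - 1))
    (hc : ∀ n, 1 < n →
      c n = if d n = d (n-1) then m (n - d n) else c (n-1) + b (n-1)) :
    (∀ n, 1 ≤ n → c n + b n ≤ c (n+1)) ∧
    Tendsto (fun n => ((a n * b n ^ 2 : ℕ) : ℝ) / ((h n : ℕ) : ℝ)) atTop (nhds 0) ∧
    Summable (fun n => (((c n + b n : ℕ)) : ℝ) / ((h n : ℕ) : ℝ)) := by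
  have hb3 : ∀ n, 1 ≤ n → 3 ≤ b n := fun n hn =>
    hb1 ▸ Nat.rel_of_forall_rel_succ_of_le_of_le (· ≤ ·) hbmono le_rfl hn
  have hgrowth := fun n (hn : 1 ≤ n) => height_growth ha hb3 hh hn
  have hpow := fun n (hn : 1 ≤ n) => pow_pred_le_of_growth hh1 hgrowth hn
  have hpos : ∀ n, 1 ≤ n → 1 ≤ h n := fun n hn =>
    (Nat.one_le_pow _ _ (by norm_num)).trans (hpow n hn)
  have hcm := c_add_b_le_m hd1 hd2 hdpos hdstep hdnoconsec hb3 hble ha hpos hgrowth hm hc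
  refine ⟨fun n hn => c_add_b_le_c_succ hc hn (hcm n hn), ?_, ?_⟩
  · refine tendsto_div_of_le_const_mul_pow (C := 36) (k := 3) (by norm_num) (fun n hn => ?_) hpow
    calc a n * b n ^ 2 ≤ (2*n+2) * (n+2) ^ 2 := by rw [ha]; gcongr; exact hble n hn
      _ ≤ (4*n) * (3*n) ^ 2 := by gcongr <;> omega
      _ = 36 * n ^ 3 := by ring
  · refine summable_div_of_sq_mul_le ?_
    filter_upwards [hdtop.eventually_ge_atTop 4, eventually_ge_atTop 1] with n hdn hn
    have hd := two_mul_le_add_one_of_no_consecutive_steps hd1 hd2 hdstep hdnoconsec n (by omega)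
    calc n ^ 2 * (c n + b n) ≤ n ^ 2 * h (n + 1 - d n + 1) := by
          refine Nat.mul_le_mul_left _ ((hcm n (by omega)).trans (m_le_height_succ ha ?_ ?_ (hm _)))
          · exact hb3 _ (by omega)
          · exact hh _ (by omega)
      _ ≤ h n := sq_mul_le_of_growth hgrowth (by omega) (by omega) (by omega)

/-- Given `(d n)` nondecreasing to infinity with `d 1 = d 2 = 1`, increments in
`{0,1}` and never two consecutive increments of `1`, and `(b n)` nondecreasing to
infinity with `b 1 = 3` and `b n ≤ n + 2`, setting `a n = 2n + 2`, `c 1 = 1` and,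
for `n > 1`, `c n = m (n - d n)` when `d n = d (n-1)` and `c n = c (n-1) + b (n-1)`
when `d n = d (n-1) + 1` (where `h 1 = 1`,
`h (n+1) = (a n * b n + 1) * h n + a n * b n * c n + a n * b n * (b n - 1)/2` and
`m n = a n * h n + (a n + 1) * (c n + b n - 1)`), these sequences define a
quasi-staircase: `c (n+1) ≥ c n + b n` for all `n ≥ 1`; moreover
`a n * b n ^ 2 / h n → 0` and `∑ (c n + b n)/h n < ∞`. -/
theorem qs_sequences_construction (d b : ℕ → ℕ)
    (hd1 : d 1 = 1) (hd2 : d 2 = 1)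
    (hdpos : ∀ n, 1 ≤ n → 1 ≤ d n)
    (hdstep : ∀ n, 1 ≤ n → d n ≤ d (n+1) ∧ d (n+1) ≤ d n + 1)
    (hdnoconsec : ∀ n, 1 ≤ n → d (n+1) = d n + 1 → d (n+2) = d (n+1))
    (hdtop : Tendsto d atTop atTop)
    (hb1 : b 1 = 3)
    (hbmono : ∀ n, 1 ≤ n → b n ≤ b (n+1))
    (hble : ∀ n, 1 ≤ n → b n ≤ n + 2)
    (hbtop : Tendsto b atTop atTop)
    (a c h m : ℕ → ℕ)
    (ha : ∀ n, a n = 2 * n + 2)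
    (hh1 : h 1 = 1)
    (hh : ∀ n, 1 ≤ n →
      h (n+1) = (a n * b n + 1) * h n + a n * b n * c n + a n * b n * (b n - 1) / 2)
    (hm : ∀ n, m n = a n * h n + (a n + 1) * (c n + b n - 1))
    (hc1 : c 1 = 1)
    (hc : ∀ n, 1 < n →
      c n = if d n = d (n-1) then m (n - d n) else c (n-1) + b (n-1)) :
    (∀ n, 1 ≤ n → c n + b n ≤ c (n+1)) ∧
    Tendsto (fun n => ((a n * b n ^ 2 : ℕ) : ℝ) / ((h n : ℕ) : ℝ)) atTop (nhds 0) ∧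
    Summable (fun n => (((c n + b n : ℕ)) : ℝ) / ((h n : ℕ) : ℝ)) :=
  qs_sequences_construction_general d b hd1 hd2 hdpos hdstep hdnoconsec hdtop hb1 hbmono hble a c h
    m ha hh1 hh hm hc
end
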